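/- Let D ⊆ (ℕ⁺)ⁿ and let r̄ = (r₁,…,r_m) ∈ (ℕ⁺)^m be a tuple such that: each rᵢ is squarefree; rᵢ and r_j are coprime for all i ≠ j; D is definable over r̄; σ(r̄) ⊆ σ(c̄) for every tuple c̄ over which D is definable; and m is least possible among all tuples satisfying these conditions. Then every monoid automorphism f of ℕ⁺ whose componentwise action on (ℕ⁺)ⁿ maps D onto D permutes the rᵢ: there is a permutation τ of {1,…,m} with f(rᵢ) = r_{τ(i)} for all i. -/

import Mathlib

open FirstOrder Language

/-- The language `L` with one binary function symbol `·` and one constant symbol `1`. -/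
def L : FirstOrder.Language :=
  ⟨fun n => match n with | 0 => Unit | 2 => Unit | _ => Empty, fun _ => Empty⟩

/-- Any monoid is an `L`-structure, with `·` interpreted as multiplication and `1` as the
identity. In particular `ℕ+` is the standard model of Skolem arithmetic, and
`Multiplicative ℕ` is the additive `L`-structure `(ℕ, +, 0)`. -/
instance (M : Type*) [Monoid M] : L.Structure M where
  funMap {n} f x :=
    match n, f, x with
    | 0, _, _ => 1
    | 2, _, x => x 0 * x 1
  RelMap r _ := r.elim

/-- `r` is squarefree: no square of a prime divides it. -/
def Sqf (r : ℕ+) : Prop := ∀ p : ℕ+, (p : ℕ).Prime → ¬ p * p ∣ r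

/-- The support of a tuple: the set of primes dividing some component. -/
def PSupp {n : ℕ} (a : Fin n → ℕ+) : Set ℕ := {p | p.Prime ∧ ∃ i, p ∣ (a i : ℕ)}

/-- `r̄` is a tuple of pairwise coprime squarefree elements over which `D` is definable,
whose support is contained in the support of every defining tuple for `D`. -/
def GoodTuple (n : ℕ) (D : Set (Fin n → ℕ+)) {m : ℕ} (r : Fin m → ℕ+) : Prop :=
  (∀ i, Sqf (r i)) ∧
  (∀ i j, i ≠ j → Nat.Coprime (r i : ℕ) (r j : ℕ)) ∧
  (∃ ψ : L.Formula (Fin n ⊕ Fin m), D = {a | ψ.Realize (Sum.elim a r)}) ∧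
  (∀ (l : ℕ) (c : Fin l → ℕ+) (χ : L.Formula (Fin n ⊕ Fin l)),
    D = {a | χ.Realize (Sum.elim a c)} → PSupp r ⊆ PSupp c)

/-!
If `f` maps `D` onto itself then `f r̄` is again a good tuple of minimal length. So it suffices
to show that when `r̄` and `s̄` are good tuples and `r̄` has minimal length, every `sⱼ ≠ 1`
divides some `rᵢ`: applied in both directions, this makes `j ↦ i` a permutation `τ` with
`f rⱼ = r_{τ j}`.

Suppose instead that the primes `p, q ∣ sⱼ` lie in different blocks `r_{i₁}` and `r_{i₂}`. Each
permutation of the primes induces an automorphism of `ℕ⁺`, and the automorphism fixes `D` if it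
fixes `r̄` or `s̄`. The transpositions inside one block of `r̄`, together with `(p q)`, generate
every permutation of the primes of `r_{i₁} r_{i₂}`. So all of these permutations fix `D`. Now take
a tuple that agrees with `r̄` once the entries `i₁, i₂` are merged, and whose `i₁`-entry has as many
prime factors as `r_{i₁}`. Any such tuple is the image of `r̄` under one of these automorphisms.
This condition is first-order, so `D` is definable over the merged tuple. Dropping the resulting
entry `1` gives a shorter good tuple.
-/

open scoped Pointwise ArithmeticFunction.Omega
open Set Equiv Equiv.Perm

namespace PNat

theorem isUnit_iff {x : ℕ+} : IsUnit x ↔ x = 1 :=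
  ⟨fun h => PNat.coe_eq_one_iff.1 (Nat.isUnit_iff.1 (h.map PNat.coeMonoidHom)),
    fun h => h ▸ isUnit_one⟩

instance : IsLocalHom PNat.coeMonoidHom :=
  ⟨fun _ h => isUnit_iff.2 (PNat.coe_eq_one_iff.1 (Nat.isUnit_iff.1 h))⟩

theorem irreducible_iff_prime {p : ℕ+} : Irreducible p ↔ (p : ℕ).Prime := by
  refine ⟨fun hp => (Nat.irreducible_iff_nat_prime _).1 ⟨?_, fun a b hab => ?_⟩,
    fun hp => Irreducible.of_map (f := coeMonoidHom) ((Nat.irreducible_iff_nat_prime _).2 hp)⟩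
  · exact fun h => hp.not_isUnit (isUnit_iff.2 (coe_eq_one_iff.1 (Nat.isUnit_iff.1 h)))
  · have ha : 0 < a := Nat.pos_of_ne_zero (by rintro rfl; simp at hab)
    have hb : 0 < b := Nat.pos_of_ne_zero (by rintro rfl; simp at hab)
    have := hp.isUnit_or_isUnit (a := ⟨a, ha⟩) (b := ⟨b, hb⟩) (PNat.eq hab)
    rw [Nat.isUnit_iff, Nat.isUnit_iff]
    exact this.imp (fun h => Subtype.ext_iff.1 (isUnit_iff.1 h))
      (fun h => Subtype.ext_iff.1 (isUnit_iff.1 h))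

def primeDivisors (z : ℕ+) : Finset Nat.Primes := Multiset.toFinset z.factorMultiset

theorem mem_primeDivisors {z : ℕ+} {p : Nat.Primes} : p ∈ z.primeDivisors ↔ (p : ℕ+) ∣ z :=
  Multiset.mem_toFinset.trans <| Multiset.one_le_count_iff_mem.symm.trans <|
    (count_factorMultiset z p 1).symm.trans <| by rw [pow_one]

theorem cardFactors_mul_of_irreducible {p : ℕ+} (hp : Irreducible p) (w : ℕ+) :
    Ω (p * w : ℕ+) = Ω w + 1 := by
  rw [mul_coe, ArithmeticFunction.cardFactors_mul p.ne_zero w.ne_zero,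
    ArithmeticFunction.cardFactors_apply_prime (irreducible_iff_prime.1 hp), add_comm]

theorem cardFactors_eq_succ_iff {z : ℕ+} {c : ℕ} :
    Ω z = c + 1 ↔ ∃ p w : ℕ+, Irreducible p ∧ p * w = z ∧ Ω w = c := by
  refine ⟨fun h => ?_, ?_⟩
  · obtain ⟨p, hp, w, rfl⟩ := exists_prime_and_dvd (n := z) (by rintro rfl; simp at h)
    have hirr := irreducible_iff_prime.2 hp
    exact ⟨p, w, hirr, rfl, by rwa [cardFactors_mul_of_irreducible hirr, add_left_inj] at h⟩
  · rintro ⟨p, w, hp, rfl, rfl⟩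
    exact cardFactors_mul_of_irreducible hp w

end PNat

theorem Nat.Primes.dvd_mul {p : Nat.Primes} {a b : ℕ+} :
    (p : ℕ+) ∣ a * b ↔ (p : ℕ+) ∣ a ∨ (p : ℕ+) ∣ b := by
  simp only [PNat.dvd_iff, PNat.mul_coe, Nat.Primes.coe_pnat_nat]
  exact p.2.dvd_mul

theorem Nat.Primes.exists_dvd {z : ℕ+} (hz : z ≠ 1) : ∃ p : Nat.Primes, (p : ℕ+) ∣ z := by
  obtain ⟨p, hp, hpz⟩ := Nat.exists_prime_and_dvd (PNat.coe_eq_one_iff.not.2 hz)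
  exact ⟨⟨p, hp⟩, PNat.dvd_iff.2 hpz⟩

theorem sqf_iff_squarefree {z : ℕ+} : Sqf z ↔ Squarefree (z : ℕ) := by
  rw [Nat.squarefree_iff_prime_squarefree]
  refine ⟨fun h p hp hpz => h ⟨p, hp.pos⟩ hp (PNat.dvd_iff.2 hpz), fun h p hp hpz => ?_⟩
  exact h p hp (by simpa using PNat.dvd_iff.1 hpz)

theorem sqf_iff_irreducible {z : ℕ+} : Sqf z ↔ ∀ p : ℕ+, Irreducible p → ¬p * p ∣ z := by
  simp only [Sqf, PNat.irreducible_iff_prime]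

theorem sqf_one : Sqf 1 := sqf_iff_squarefree.2 squarefree_one

theorem sqf_mul_of_coprime {a b : ℕ+} (ha : Sqf a) (hb : Sqf b) (h : Nat.Coprime a b) :
    Sqf (a * b) := by
  rw [sqf_iff_squarefree, PNat.mul_coe, Nat.squarefree_mul_iff]
  exact ⟨h, sqf_iff_squarefree.1 ha, sqf_iff_squarefree.1 hb⟩

namespace Sqf

variable {z : ℕ+}

theorem nodup_factorMultiset (hz : Sqf z) : (z.factorMultiset : Multiset Nat.Primes).Nodup := by
  have h := (Nat.squarefree_iff_nodup_primeFactorsList z.ne_zero).1 (sqf_iff_squarefree.1 hz)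
  rw [← Multiset.coe_nodup, ← PNat.coeNat_factorMultiset] at h
  exact (Multiset.nodup_map_iff_of_injective Nat.Primes.coe_nat_injective).1 h

theorem prod_primeDivisors (hz : Sqf z) : ∏ p ∈ z.primeDivisors, (p : ℕ+) = z := by
  rw [Finset.prod_eq_multiset_prod]
  exact (congrArg (fun s => (s.map Nat.Primes.toPNat).prod) hz.nodup_factorMultiset.dedup).trans
    (PNat.prod_factorMultiset z)

theorem card_primeDivisors (hz : Sqf z) : z.primeDivisors.card = Ω z := by
  rw [PNat.primeDivisors, Multiset.toFinset_card_of_nodup hz.nodup_factorMultiset,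
    ArithmeticFunction.cardFactors_apply, ← Multiset.coe_card, ← PNat.coeNat_factorMultiset,
    PrimeMultiset.toNatMultiset]
  exact (Multiset.card_map _ _).symm

theorem dvd_of_forall_prime_dvd (hz : Sqf z) {w : ℕ+}
    (h : ∀ p : Nat.Primes, (p : ℕ+) ∣ z → (p : ℕ+) ∣ w) : z ∣ w := by
  rw [← PNat.factorMultiset_le_iff]
  refine (Multiset.le_iff_subset hz.nodup_factorMultiset).2 fun p hp => ?_
  have hp' := h p (PNat.mem_primeDivisors.1 (Multiset.mem_toFinset.2 hp))
  exact Multiset.mem_toFinset.1 (PNat.mem_primeDivisors.2 hp')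

end Sqf

theorem coprime_iff_irreducible {a b : ℕ+} :
    Nat.Coprime a b ↔ ∀ p : ℕ+, Irreducible p → p ∣ a → ¬p ∣ b := by
  refine ⟨fun h p hp ha hb => ?_, fun h => Nat.coprime_of_dvd fun k hk ha hb =>
    h ⟨k, hk.pos⟩ (PNat.irreducible_iff_prime.2 hk) (PNat.dvd_iff.2 ha) (PNat.dvd_iff.2 hb)⟩
  rw [PNat.dvd_iff] at ha hb
  exact (PNat.irreducible_iff_prime.1 hp).ne_one ((h.coprime_dvd_left ha).eq_one_of_dvd hb)

theorem eq_of_dvd_of_coprime {ι : Type*} {x : ι → ℕ+}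
    (hx : ∀ i j, i ≠ j → Nat.Coprime (x i) (x j)) {p : Nat.Primes} {i j : ι}
    (hi : (p : ℕ+) ∣ x i) (hj : (p : ℕ+) ∣ x j) : i = j := by
  by_contra h
  rw [PNat.dvd_iff, Nat.Primes.coe_pnat_nat] at hi hj
  exact p.2.ne_one ((hx i j h).coprime_dvd_left hi |>.eq_one_of_dvd hj)

theorem MulEquiv.forall_irreducible_iff {M N : Type*} [Monoid M] [Monoid N] (e : M ≃* N)
    {P : N → Prop} : (∀ p, Irreducible p → P p) ↔ ∀ p, Irreducible p → P (e p) := by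
  simp only [(EquivLike.surjective e).forall, MulEquiv.irreducible_iff]

theorem sqf_map_iff (e : ℕ+ ≃* ℕ+) {z : ℕ+} : Sqf (e z) ↔ Sqf z := by
  simp only [sqf_iff_irreducible, e.forall_irreducible_iff (P := fun p => ¬p * p ∣ e z),
    ← map_mul, map_dvd_iff]

theorem coprime_map_iff (e : ℕ+ ≃* ℕ+) {a b : ℕ+} : Nat.Coprime (e a) (e b) ↔ Nat.Coprime a b := by
  simp only [coprime_iff_irreducible, e.forall_irreducible_iff (P := fun p => p ∣ e a → ¬p ∣ e b),
    map_dvd_iff]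

theorem mem_pSupp_iff {k : ℕ} {x : Fin k → ℕ+} {p : Nat.Primes} :
    (p : ℕ) ∈ PSupp x ↔ ∃ i, (p : ℕ+) ∣ x i := by
  simp only [PSupp, mem_ofPred_eq, PNat.dvd_iff, Nat.Primes.coe_pnat_nat, p.2, true_and]

theorem pSupp_subset_iff {k l : ℕ} {x : Fin k → ℕ+} {y : Fin l → ℕ+} :
    PSupp x ⊆ PSupp y ↔ ∀ p : ℕ+, Irreducible p → (∃ i, p ∣ x i) → ∃ j, p ∣ y j := by
  refine ⟨fun h p hp ⟨i, hi⟩ => ?_, fun h q ⟨hq, i, hi⟩ => ?_⟩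
  · obtain ⟨-, j, hj⟩ := h ⟨PNat.irreducible_iff_prime.1 hp, i, PNat.dvd_iff.1 hi⟩
    exact ⟨j, PNat.dvd_iff.2 hj⟩
  · obtain ⟨j, hj⟩ := h ⟨q, hq.pos⟩ (PNat.irreducible_iff_prime.2 hq) ⟨i, PNat.dvd_iff.2 hi⟩
    exact ⟨hq, j, PNat.dvd_iff.1 hj⟩

theorem pSupp_smul_subset_smul_iff (e : MulAut ℕ+) {k l : ℕ} {x : Fin k → ℕ+} {y : Fin l → ℕ+} :
    PSupp (e • x) ⊆ PSupp (e • y) ↔ PSupp x ⊆ PSupp y := by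
  simp only [pSupp_subset_iff, Pi.smul_apply, MulAut.smul_def,
    e.forall_irreducible_iff (P := fun p => (∃ i, p ∣ e (x i)) → ∃ j, p ∣ e (y j)), map_dvd_iff]

namespace PNat

/- `PrimeMultiset` is a type synonym for `Multiset Nat.Primes`; rewriting with multiset lemmas
across it fails, so these identities are assembled in term mode. -/

def permPrimes (σ : Perm Nat.Primes) (z : ℕ+) : ℕ+ :=
  PrimeMultiset.prod (Multiset.map σ z.factorMultiset)

theorem factorMultiset_permPrimes (σ : Perm Nat.Primes) (z : ℕ+) :
    ((permPrimes σ z).factorMultiset : Multiset Nat.Primes) = Multiset.map σ z.factorMultiset :=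
  PrimeMultiset.factorMultiset_prod _

theorem permPrimes_permPrimes (σ τ : Perm Nat.Primes) (z : ℕ+) :
    permPrimes σ (permPrimes τ z) = permPrimes (σ * τ) z :=
  (congrArg (fun s => PrimeMultiset.prod (Multiset.map σ s)) (factorMultiset_permPrimes τ z)).trans
    (congrArg PrimeMultiset.prod (Multiset.map_map _ _ _))

theorem permPrimes_one (z : ℕ+) : permPrimes 1 z = z :=
  (congrArg PrimeMultiset.prod (Multiset.map_id _)).trans (prod_factorMultiset z)

theorem permPrimes_mul (σ : Perm Nat.Primes) (a b : ℕ+) :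
    permPrimes σ (a * b) = permPrimes σ a * permPrimes σ b :=
  (congrArg (fun s => PrimeMultiset.prod (Multiset.map σ s)) (factorMultiset_mul a b)).trans <|
    (congrArg PrimeMultiset.prod (Multiset.map_add _ _ _)).trans (PrimeMultiset.prod_add _ _)

end PNat

def mulAutOfPerm : Perm Nat.Primes →* MulAut ℕ+ where
  toFun σ :=
    { toFun := PNat.permPrimes σ
      invFun := PNat.permPrimes σ⁻¹
      left_inv z := by rw [PNat.permPrimes_permPrimes, inv_mul_cancel, PNat.permPrimes_one]
      right_inv z := by rw [PNat.permPrimes_permPrimes, mul_inv_cancel, PNat.permPrimes_one]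
      map_mul' := PNat.permPrimes_mul σ }
  map_one' := MulEquiv.ext PNat.permPrimes_one
  map_mul' σ τ := by
    ext z
    exact (PNat.permPrimes_permPrimes σ τ z).symm

theorem mulAutOfPerm_apply_prime (σ : Perm Nat.Primes) (p : Nat.Primes) :
    mulAutOfPerm σ p = σ p :=
  (congrArg (fun s => PrimeMultiset.prod (Multiset.map σ s)) (PNat.factorMultiset_ofPrime p)).trans
    (PrimeMultiset.prod_ofPrime (σ p))

theorem mulAutOfPerm_apply_of_sqf (σ : Perm Nat.Primes) {z : ℕ+} (hz : Sqf z) :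
    mulAutOfPerm σ z = ∏ p ∈ z.primeDivisors.map σ.toEmbedding, (p : ℕ+) := by
  conv_lhs => rw [← hz.prod_primeDivisors]
  simp only [map_prod, mulAutOfPerm_apply_prime, Finset.prod_map, Equiv.coe_toEmbedding]

theorem mulAutOfPerm_apply_eq_self (σ : Perm Nat.Primes) {z : ℕ+} (hz : Sqf z)
    (h : ∀ p : Nat.Primes, (p : ℕ+) ∣ z → (σ p : ℕ+) ∣ z) : mulAutOfPerm σ z = z := by
  have hmap : z.primeDivisors.map σ.toEmbedding = z.primeDivisors := by
    refine Finset.eq_of_subset_of_card_le (fun q hq => ?_) (Finset.card_map _).ge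
    obtain ⟨p, hp, rfl⟩ := Finset.mem_map.1 hq
    exact PNat.mem_primeDivisors.2 (h p (PNat.mem_primeDivisors.1 hp))
  rw [mulAutOfPerm_apply_of_sqf σ hz, hmap, hz.prod_primeDivisors]

namespace Equiv.Perm

variable {α : Type*} [DecidableEq α] {B : Finset α}

theorem ofSubtype_mem_of_forall_swap_mem {G : Subgroup (Perm α)}
    (hG : ∀ a ∈ B, ∀ b ∈ B, swap a b ∈ G) (τ : Perm {x // x ∈ B}) : ofSubtype τ ∈ G := by
  suffices h : G.comap ofSubtype = ⊤ from Subgroup.mem_comap.1 (h ▸ Subgroup.mem_top τ)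
  rw [eq_top_iff, ← closure_isSwap, Subgroup.closure_le]
  rintro _ ⟨a, b, -, rfl⟩
  rw [SetLike.mem_coe, Subgroup.mem_comap, ofSubtype_swap_eq]
  exact hG a a.2 b b.2

theorem exists_ofSubtype_map_eq {S T : Finset α} (hS : S ⊆ B) (hT : T ⊆ B)
    (h : S.card = T.card) : ∃ τ : Perm {x // x ∈ B}, S.map (ofSubtype τ).toEmbedding = T := by
  obtain ⟨τ, hτ⟩ := exists_map_finset_eq (S.subtype (· ∈ B)) (T.subtype (· ∈ B)) (by
    rwa [Finset.card_subtype, Finset.card_subtype, Finset.filter_true_of_mem hS,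
      Finset.filter_true_of_mem hT])
  refine ⟨τ, ?_⟩
  rw [← Finset.subtype_map_of_mem hS, ← Finset.subtype_map_of_mem hT, ← hτ, Finset.map_map,
    Finset.map_map]
  congr 1
  ext x
  simp [ofSubtype_apply_coe]

end Equiv.Perm

section Definability

variable {M N : Type*} [Monoid M] [Monoid N] {α β γ : Type*}

def MulEquiv.toLEquiv (e : M ≃* N) : M ≃[L] N where
  toEquiv := e.toEquiv
  map_fun' {k} f _ :=
    match k, f with
    | 0, _ => map_one e
    | 2, _ => map_mul e _ _
  map_rel' r := r.elim

theorem realize_comp_mulEquiv (e : M ≃* N) (φ : L.Formula α) (v : α → M) :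
    φ.Realize (e ∘ v) ↔ φ.Realize v :=
  StrongHomClass.realize_formula e.toLEquiv φ

def DefinableOver (D : Set (α → M)) (x : β → M) : Prop :=
  ∃ ψ : L.Formula (α ⊕ β), D = {a | ψ.Realize (Sum.elim a x)}

theorem smul_setOf_realize (e : MulAut M) (ψ : L.Formula (α ⊕ β)) (x : β → M) :
    e • {a : α → M | ψ.Realize (Sum.elim a x)} = {a | ψ.Realize (Sum.elim a (e • x))} := by
  ext a
  rw [mem_smul_set_iff_inv_smul_mem, mem_ofPred_eq, mem_ofPred_eq, ← realize_comp_mulEquiv e]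
  congr! 1
  funext i
  cases i <;> simp [MulAut.smul_def]

theorem DefinableOver.smul {D : Set (α → M)} {x : β → M} (h : DefinableOver D x) (e : MulAut M) :
    DefinableOver (e • D) (e • x) := by
  obtain ⟨ψ, rfl⟩ := h
  exact ⟨ψ, smul_setOf_realize e ψ x⟩

theorem DefinableOver.smul_eq_self {D : Set (α → M)} {x : β → M} (h : DefinableOver D x)
    {e : MulAut M} (he : e • x = x) : e • D = D := by
  obtain ⟨ψ, rfl⟩ := h
  rw [smul_setOf_realize, he]

theorem DefinableOver.of_exists [Finite β] {T : Set (β ⊕ γ → M)} (hT : (∅ : Set M).Definable L T)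
    (ψ : L.Formula (α ⊕ β)) (y : γ → M) :
    DefinableOver {a | ∃ x, Sum.elim x y ∈ T ∧ ψ.Realize (Sum.elim a x)} y := by
  set S : Set ((α ⊕ γ) ⊕ β → M) := {w | w ∘ Sum.elim Sum.inr (Sum.inl ∘ Sum.inr) ∈ T ∧
    ψ.Realize (w ∘ Sum.elim (Sum.inl ∘ Sum.inl) Sum.inr)}
  have hS : (∅ : Set M).Definable L S :=
    (hT.preimage_comp _).inter ((empty_definable_iff.2 ⟨ψ, rfl⟩).preimage_comp _)
  obtain ⟨χ, hχ⟩ := empty_definable_iff.1 hS.exists_of_finite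
  refine ⟨χ, ext fun a => ?_⟩
  have := Set.ext_iff.1 hχ (Sum.elim a y)
  simp only [S, mem_ofPred_eq] at this
  simp only [mem_ofPred_eq, ← this, Sum.comp_elim, ← Function.comp_assoc, Sum.elim_comp_inl,
    Sum.elim_comp_inr]

theorem definable_mul_eq (i j k : α) : (∅ : Set M).Definable L {v | v i * v j = v k} :=
  empty_definable_iff.2
    ⟨(Term.func (L := L) (l := 2) () ![Term.var i, Term.var j]).equal (Term.var k), rfl⟩

theorem definable_eq_one (i : α) : (∅ : Set M).Definable L {v | v i = 1} :=
  empty_definable_iff.2 ⟨(Term.var i).equal (Term.func (L := L) (l := 0) () ![]), rfl⟩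

theorem definable_eq (i j : α) : (∅ : Set M).Definable L {v | v i = v j} :=
  empty_definable_iff.2 ⟨(Term.var i).equal (Term.var j), rfl⟩

theorem DefinableOver.comp_succAbove {k : ℕ} {D : Set (α → M)}
    {x : Fin (k + 1) → M} (hD : DefinableOver D x) {i : Fin (k + 1)} (hi : x i = 1) :
    DefinableOver D (x ∘ i.succAbove) := by
  obtain ⟨ψ, rfl⟩ := hD
  have hT : (∅ : Set M).Definable L {w : Fin (k + 1) ⊕ Fin k → M |
      w (Sum.inl i) = 1 ∧ ∀ t, w (Sum.inl (i.succAbove t)) = w (Sum.inr t)} := by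
    convert (definable_eq_one (Sum.inl i)).inter (definable_iInter_of_finite fun t =>
      definable_eq (Sum.inl (i.succAbove t)) (Sum.inr t)) using 1
    ext w
    simp
  convert DefinableOver.of_exists hT ψ (x ∘ i.succAbove) using 1
  ext a
  simp only [mem_ofPred_eq, Sum.elim_inl, Sum.elim_inr, Function.comp_apply]
  refine ⟨fun h => ⟨x, ⟨hi, fun _ => rfl⟩, h⟩, fun ⟨x', ⟨hx'i, hx'⟩, h⟩ => ?_⟩
  have : x' = x := funext_iff.2 ((Fin.forall_iff_succAbove i).2 ⟨hx'i.trans hi.symm, hx'⟩)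
  exact this ▸ h

end Definability

theorem definable_irreducible {α : Type*} [Finite α] (i : α) :
    (∅ : Set ℕ+).Definable L {v | Irreducible (v i)} := by
  have hT := (definable_mul_eq (M := ℕ+) (Sum.inr 0) (Sum.inr 1) (Sum.inl i : α ⊕ Fin 2)).himp
    ((definable_eq_one (Sum.inr 0)).union (definable_eq_one (Sum.inr 1)))
  convert (definable_eq_one i).compl.inter hT.forall_of_finite using 1
  ext v
  simp [irreducible_iff, PNat.isUnit_iff, Fin.forall_fin_succ_pi, eq_comm]

theorem definable_cardFactors_eq (c : ℕ) {α : Type*} [Finite α] (i : α) :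
    (∅ : Set ℕ+).Definable L {v | Ω (v i) = c} := by
  induction c generalizing α with
  | zero =>
    convert definable_eq_one i using 1
    ext v
    simp [ArithmeticFunction.cardFactors_eq_zero_iff_eq_zero_or_one]
  | succ c ih =>
    convert ((definable_irreducible (Sum.inr 0)).inter ((definable_mul_eq (Sum.inr 0) (Sum.inr 1)
      (Sum.inl i : α ⊕ Fin 2)).inter (ih (Sum.inr 1)))).exists_of_finite using 1
    ext v
    simp [PNat.cardFactors_eq_succ_iff, Fin.exists_fin_succ_pi]

section Merge

variable {ι M : Type*} [DecidableEq ι] [Monoid M]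

/-- The entry `i₂` becomes `1` instead of being removed, so that the index type is kept;
`GoodTuple.ne_one` removes such entries. -/
def mergePair (x : ι → M) (i₁ i₂ : ι) : ι → M :=
  Function.update (Function.update x i₁ (x i₁ * x i₂)) i₂ 1

variable {x : ι → M} {i₁ i₂ : ι}

theorem mergePair_apply_left (h : i₁ ≠ i₂) : mergePair x i₁ i₂ i₁ = x i₁ * x i₂ := by
  simp [mergePair, h]

theorem mergePair_apply_right : mergePair x i₁ i₂ i₂ = 1 := by
  simp [mergePair]

theorem mergePair_apply_of_ne {j : ι} (h₁ : j ≠ i₁) (h₂ : j ≠ i₂) : mergePair x i₁ i₂ j = x j := by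
  simp [mergePair, h₁, h₂]

end Merge

section PrimeTuples

variable {ι : Type*} {x : ι → ℕ+}

theorem mulAutOfPerm_swap_smul_eq_self (hsq : ∀ i, Sqf (x i))
    (hcop : ∀ i j, i ≠ j → Nat.Coprime (x i) (x j)) {a b : Nat.Primes} {i : ι}
    (ha : (a : ℕ+) ∣ x i) (hb : (b : ℕ+) ∣ x i) : mulAutOfPerm (swap a b) • x = x := by
  funext j
  refine mulAutOfPerm_apply_eq_self _ (hsq j) fun p hp => ?_
  rw [swap_apply_def]
  split_ifs with hpa hpb
  · exact eq_of_dvd_of_coprime hcop ha (hpa ▸ hp) ▸ hb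
  · exact eq_of_dvd_of_coprime hcop hb (hpb ▸ hp) ▸ ha
  · exact hp

variable [DecidableEq ι] {i₁ i₂ : ι}

theorem sqf_mergePair (hsq : ∀ i, Sqf (x i)) (hcop : ∀ i j, i ≠ j → Nat.Coprime (x i) (x j))
    (hne : i₁ ≠ i₂) (j : ι) : Sqf (mergePair x i₁ i₂ j) := by
  rcases eq_or_ne j i₂ with rfl | hj₂
  · rw [mergePair_apply_right]
    exact sqf_one
  rcases eq_or_ne j i₁ with rfl | hj₁
  · rw [mergePair_apply_left hne]
    exact sqf_mul_of_coprime (hsq _) (hsq _) (hcop _ _ hne)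
  · rw [mergePair_apply_of_ne hj₁ hj₂]
    exact hsq j

theorem coprime_mergePair (hcop : ∀ i j, i ≠ j → Nat.Coprime (x i) (x j)) (hne : i₁ ≠ i₂) :
    ∀ j j', j ≠ j' →
      Nat.Coprime ((mergePair x i₁ i₂ j : ℕ+) : ℕ) ((mergePair x i₁ i₂ j' : ℕ+) : ℕ) := by
  have hR : ∀ j, j ≠ i₁ → j ≠ i₂ → Nat.Coprime (x i₁ * x i₂) (x j) := fun j h₁ h₂ =>
    .mul_left (hcop _ _ h₁.symm) (hcop _ _ h₂.symm)
  intro j j' hjj'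
  rcases eq_or_ne j i₂ with rfl | hj₂
  · rw [mergePair_apply_right, PNat.one_coe]
    exact Nat.coprime_one_left _
  rcases eq_or_ne j' i₂ with rfl | hj₂'
  · rw [mergePair_apply_right, PNat.one_coe]
    exact Nat.coprime_one_right _
  rcases eq_or_ne j i₁ with rfl | hj₁
  · rw [mergePair_apply_left hne, mergePair_apply_of_ne hjj'.symm hj₂']
    exact hR j' hjj'.symm hj₂'
  rcases eq_or_ne j' i₁ with rfl | hj₁'
  · rw [mergePair_apply_left hne, mergePair_apply_of_ne hj₁ hj₂]
    exact (hR j hj₁ hj₂).symm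
  · rw [mergePair_apply_of_ne hj₁ hj₂, mergePair_apply_of_ne hj₁' hj₂']
    exact hcop j j' hjj'

theorem exists_mulAutOfPerm_smul_eq_of_mergePair_eq (hsq : ∀ i, Sqf (x i))
    (hcop : ∀ i j, i ≠ j → Nat.Coprime (x i) (x j)) (hne : i₁ ≠ i₂) {x' : ι → ℕ+}
    (hx' : mergePair x' i₁ i₂ = mergePair x i₁ i₂) (hΩ : Ω (x' i₁) = Ω (x i₁)) :
    ∃ τ : Perm {p // p ∈ (x i₁ * x i₂).primeDivisors}, mulAutOfPerm (ofSubtype τ) • x = x' := by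
  set R := x i₁ * x i₂
  have hR : Sqf R := sqf_mul_of_coprime (hsq _) (hsq _) (hcop _ _ hne)
  have hprod : x' i₁ * x' i₂ = R := by
    simpa only [mergePair_apply_left hne] using congrFun hx' i₁
  have hsq' : Sqf (x' i₁) := sqf_iff_squarefree.2 ((sqf_iff_squarefree.1 hR).squarefree_of_dvd
    (PNat.dvd_iff.1 (hprod ▸ dvd_mul_right _ _)))
  have hsub : ∀ {z}, z ∣ R → z.primeDivisors ⊆ R.primeDivisors := fun hz _ hp =>
    PNat.mem_primeDivisors.2 ((PNat.mem_primeDivisors.1 hp).trans hz)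
  obtain ⟨τ, hτ⟩ := Perm.exists_ofSubtype_map_eq (hsub (dvd_mul_right _ _))
    (hsub (hprod ▸ dvd_mul_right _ _))
    (by rw [(hsq _).card_primeDivisors, hsq'.card_primeDivisors, hΩ])
  refine ⟨τ, funext fun j => ?_⟩
  simp only [Pi.smul_apply, MulAut.smul_def]
  have h₁ : mulAutOfPerm (ofSubtype τ) (x i₁) = x' i₁ := by
    rw [mulAutOfPerm_apply_of_sqf _ (hsq _), hτ, hsq'.prod_primeDivisors]
  by_cases hj₁ : j = i₁
  · exact hj₁ ▸ h₁
  by_cases hj₂ : j = i₂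
  · subst hj₂
    have hfix : mulAutOfPerm (ofSubtype τ) R = R := mulAutOfPerm_apply_eq_self _ hR fun p hp => by
      rw [← PNat.mem_primeDivisors] at hp ⊢
      rw [ofSubtype_apply_of_mem τ hp]
      exact (τ ⟨p, hp⟩).2
    refine mul_left_cancel (a := x' i₁) ?_
    rw [hprod, ← h₁, ← map_mul]
    exact hfix
  · have hxj : x' j = x j := by simpa only [mergePair_apply_of_ne hj₁ hj₂] using congrFun hx' j
    rw [hxj]
    refine mulAutOfPerm_apply_eq_self _ (hsq j) fun p hp => ?_
    rw [ofSubtype_apply_of_not_mem τ fun hpR => ?_]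
    · exact hp
    rcases Nat.Primes.dvd_mul.1 (PNat.mem_primeDivisors.1 hpR) with h | h
    · exact hj₁ (eq_of_dvd_of_coprime hcop hp h)
    · exact hj₂ (eq_of_dvd_of_coprime hcop hp h)

theorem definable_mergePair_eq [Finite ι] (hne : i₁ ≠ i₂) :
    (∅ : Set ℕ+).Definable L {w : ι ⊕ ι → ℕ+ | mergePair (w ∘ Sum.inl) i₁ i₂ = w ∘ Sum.inr} := by
  simp only [funext_iff, ofPred_forall]
  refine definable_iInter_of_finite fun j => ?_
  by_cases h₂ : j = i₂
  · subst h₂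
    simpa only [mergePair_apply_right, Function.comp_apply, eq_comm] using
      definable_eq_one (M := ℕ+) (Sum.inr j : ι ⊕ ι)
  by_cases h₁ : j = i₁
  · subst h₁
    simpa only [mergePair_apply_left hne, Function.comp_apply] using
      definable_mul_eq (M := ℕ+) (Sum.inl j) (Sum.inl i₂) (Sum.inr j)
  · simpa only [mergePair_apply_of_ne h₁ h₂, Function.comp_apply] using
      definable_eq (M := ℕ+) (Sum.inl j) (Sum.inr j)

theorem DefinableOver.mergePair [Finite ι] {α : Type*} {D : Set (α → ℕ+)}
    (hD : DefinableOver D x) (hsq : ∀ i, Sqf (x i))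
    (hcop : ∀ i j, i ≠ j → Nat.Coprime (x i) (x j)) (hne : i₁ ≠ i₂)
    (hD' : ∀ τ : Perm {p // p ∈ (x i₁ * x i₂).primeDivisors}, mulAutOfPerm (ofSubtype τ) • D = D) :
    DefinableOver D (_root_.mergePair x i₁ i₂) := by
  obtain ⟨ψ, rfl⟩ := hD
  convert DefinableOver.of_exists ((definable_mergePair_eq hne).inter
    (definable_cardFactors_eq (Ω (x i₁)) (Sum.inl i₁))) ψ (_root_.mergePair x i₁ i₂) using 1
  ext a
  simp only [mem_ofPred_eq, mem_inter_iff, Sum.elim_comp_inl, Sum.elim_comp_inr, Sum.elim_inl]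
  refine ⟨fun h => ⟨x, ⟨rfl, rfl⟩, h⟩, fun ⟨x', ⟨hx', hΩ⟩, h⟩ => ?_⟩
  obtain ⟨τ, rfl⟩ := exists_mulAutOfPerm_smul_eq_of_mergePair_eq hsq hcop hne hx' hΩ
  have h' : a ∈ mulAutOfPerm (ofSubtype τ) • {a : α → ℕ+ | ψ.Realize (Sum.elim a x)} := by
    rwa [smul_setOf_realize]
  rwa [hD' τ] at h'

end PrimeTuples

theorem pSupp_mergePair_subset {k : ℕ} {x : Fin k → ℕ+} {i₁ i₂ : Fin k} (hne : i₁ ≠ i₂) :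
    PSupp (mergePair x i₁ i₂) ⊆ PSupp x := by
  rintro p ⟨hp, j, hj⟩
  rcases eq_or_ne j i₂ with rfl | hj₂
  · rw [mergePair_apply_right, PNat.one_coe] at hj
    exact absurd (Nat.eq_one_of_dvd_one hj) hp.ne_one
  rcases eq_or_ne j i₁ with rfl | hj₁
  · rw [mergePair_apply_left hne, PNat.mul_coe] at hj
    exact (hp.dvd_mul.1 hj).elim (fun h => ⟨hp, _, h⟩) fun h => ⟨hp, _, h⟩
  · rw [mergePair_apply_of_ne hj₁ hj₂] at hj
    exact ⟨hp, j, hj⟩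

namespace GoodTuple

variable {n m : ℕ} {D : Set (Fin n → ℕ+)} {r : Fin m → ℕ+}

theorem sqf (hr : GoodTuple n D r) (i : Fin m) : Sqf (r i) := hr.1 i

theorem coprime (hr : GoodTuple n D r) {i j : Fin m} (h : i ≠ j) : Nat.Coprime (r i) (r j) :=
  hr.2.1 i j h

theorem definableOver (hr : GoodTuple n D r) : DefinableOver D r := hr.2.2.1

theorem pSupp_subset (hr : GoodTuple n D r) {l : ℕ} {c : Fin l → ℕ+} (hc : DefinableOver D c) :
    PSupp r ⊆ PSupp c :=
  let ⟨χ, hχ⟩ := hc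
  hr.2.2.2 l c χ hχ

theorem of_pSupp_subset (hr : GoodTuple n D r) {k : ℕ} {y : Fin k → ℕ+} (hsq : ∀ i, Sqf (y i))
    (hcop : ∀ i j, i ≠ j → Nat.Coprime (y i) (y j)) (hD : DefinableOver D y)
    (hy : PSupp y ⊆ PSupp r) : GoodTuple n D y :=
  ⟨hsq, hcop, hD, fun _ _ χ hχ => hy.trans (hr.pSupp_subset ⟨χ, hχ⟩)⟩

theorem smul (hr : GoodTuple n D r) {e : MulAut ℕ+} (he : e • D = D) : GoodTuple n D (e • r) := by
  refine ⟨fun i => (sqf_map_iff e).2 (hr.sqf i), fun i j h => (coprime_map_iff e).2 (hr.coprime h),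
    he ▸ hr.definableOver.smul e, fun l c χ hχ => ?_⟩
  have hχ' : D = {a | χ.Realize (Sum.elim a (e⁻¹ • c))} := by
    rw [← smul_setOf_realize, ← hχ]
    exact eq_inv_smul_iff.2 he
  simpa only [smul_inv_smul] using (pSupp_smul_subset_smul_iff e).2 (hr.pSupp_subset ⟨χ, hχ'⟩)

theorem ne_one (hr : GoodTuple n D r)
    (hmin : ∀ (m' : ℕ) (r' : Fin m' → ℕ+), GoodTuple n D r' → m ≤ m') (i : Fin m) : r i ≠ 1 := by
  intro h
  obtain ⟨k, rfl⟩ : ∃ k, m = k + 1 := Nat.exists_eq_succ_of_ne_zero i.pos.ne'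
  have := hr.of_pSupp_subset (fun t => hr.sqf _)
    (fun t t' h => hr.coprime (Fin.succAbove_right_injective.ne h))
    (hr.definableOver.comp_succAbove h) fun p ⟨hp, t, ht⟩ => ⟨hp, _, ht⟩
  exact absurd (hmin k _ this) (by omega)

theorem mergePair (hr : GoodTuple n D r) {i₁ i₂ : Fin m} (hne : i₁ ≠ i₂)
    (hD : ∀ τ : Perm {p // p ∈ (r i₁ * r i₂).primeDivisors}, mulAutOfPerm (ofSubtype τ) • D = D) :
    GoodTuple n D (_root_.mergePair r i₁ i₂) :=
  hr.of_pSupp_subset (sqf_mergePair hr.sqf (fun _ _ => hr.coprime) hne)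
    (coprime_mergePair (fun _ _ => hr.coprime) hne)
    (hr.definableOver.mergePair hr.sqf (fun _ _ => hr.coprime) hne hD) (pSupp_mergePair_subset hne)

theorem eq_of_primes_dvd (hr : GoodTuple n D r)
    (hmin : ∀ (m' : ℕ) (r' : Fin m' → ℕ+), GoodTuple n D r' → m ≤ m') {k : ℕ} {s : Fin k → ℕ+}
    (hs : GoodTuple n D s) {p q : Nat.Primes} {j : Fin k} {i₁ i₂ : Fin m}
    (hp : (p : ℕ+) ∣ s j) (hq : (q : ℕ+) ∣ s j) (hp' : (p : ℕ+) ∣ r i₁) (hq' : (q : ℕ+) ∣ r i₂) :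
    i₁ = i₂ := by
  by_contra hne
  set G := (MulAction.stabilizer (MulAut ℕ+) D).comap mulAutOfPerm
  have hr_swap : ∀ {a b : Nat.Primes} {i}, (a : ℕ+) ∣ r i → (b : ℕ+) ∣ r i → swap a b ∈ G :=
    fun ha hb => hr.definableOver.smul_eq_self (mulAutOfPerm_swap_smul_eq_self hr.sqf
      (fun _ _ => hr.coprime) ha hb)
  have hpq : swap q p ∈ G := hs.definableOver.smul_eq_self (mulAutOfPerm_swap_smul_eq_self hs.sqf
    (fun _ _ => hs.coprime) hq hp)
  have hswap_p : ∀ a ∈ (r i₁ * r i₂).primeDivisors, swap a p ∈ G := fun a ha =>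
    (Nat.Primes.dvd_mul.1 (PNat.mem_primeDivisors.1 ha)).elim (fun ha => hr_swap ha hp')
      fun ha => SubmonoidClass.swap_mem_trans G (hr_swap ha hq') hpq
  have hD : ∀ τ : Perm {p // p ∈ (r i₁ * r i₂).primeDivisors}, mulAutOfPerm (ofSubtype τ) • D = D :=
    Perm.ofSubtype_mem_of_forall_swap_mem fun a ha b hb =>
      SubmonoidClass.swap_mem_trans G (hswap_p a ha) (swap_comm b p ▸ hswap_p b hb)
  exact (hr.mergePair hne hD).ne_one hmin i₂ mergePair_apply_right

theorem exists_dvd (hr : GoodTuple n D r)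
    (hmin : ∀ (m' : ℕ) (r' : Fin m' → ℕ+), GoodTuple n D r' → m ≤ m') {k : ℕ} {s : Fin k → ℕ+}
    (hs : GoodTuple n D s) {j : Fin k} (hj : s j ≠ 1) : ∃ i, s j ∣ r i := by
  have hsr : ∀ q : Nat.Primes, (q : ℕ+) ∣ s j → ∃ i, (q : ℕ+) ∣ r i := fun q hq =>
    mem_pSupp_iff.1 (hs.pSupp_subset hr.definableOver (mem_pSupp_iff.2 ⟨j, hq⟩))
  obtain ⟨p, hp⟩ := Nat.Primes.exists_dvd hj
  obtain ⟨i, hi⟩ := hsr p hp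
  refine ⟨i, (hs.sqf j).dvd_of_forall_prime_dvd fun q hq => ?_⟩
  obtain ⟨i', hi'⟩ := hsr q hq
  rwa [hr.eq_of_primes_dvd hmin hs hp hq hi hi']

theorem eq_of_dvd (hr : GoodTuple n D r) {i j : Fin m} (hi : r i ≠ 1) (h : r i ∣ r j) : i = j := by
  by_contra hij
  exact hi (PNat.coe_eq_one_iff.1 ((hr.coprime hij).eq_one_of_dvd (PNat.dvd_iff.1 h)))

end GoodTuple

/-- If `r̄` is a good tuple for `D` of least possible length, then every monoid
automorphism of `ℕ⁺` fixing `D` setwise permutes the components of `r̄`. -/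
theorem automorphism_permutes_minimal_radicals (n m : ℕ) (D : Set (Fin n → ℕ+))
    (r : Fin m → ℕ+) (hr : GoodTuple n D r)
    (hmin : ∀ (m' : ℕ) (r' : Fin m' → ℕ+), GoodTuple n D r' → m ≤ m') :
    ∀ f : ℕ+ ≃* ℕ+, (fun a : Fin n → ℕ+ => fun i => f (a i)) '' D = D →
      ∃ τ : Equiv.Perm (Fin m), ∀ i, f (r i) = r (τ i) := by
  intro f hf
  have hs : GoodTuple n D (f • r) := hr.smul hf
  choose c hc using fun j => hr.exists_dvd hmin hs (hs.ne_one hmin j)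
  choose d hd using fun i => hs.exists_dvd hmin hr (hr.ne_one hmin i)
  have hdc : Function.LeftInverse d c := fun j =>
    (hs.eq_of_dvd (hs.ne_one hmin j) ((hc j).trans (hd (c j)))).symm
  refine ⟨Equiv.ofBijective c (Finite.injective_iff_bijective.1 hdc.injective),
    fun j => PNat.dvd_antisymm (hc j) ?_⟩
  have h := hd (c j)
  rw [hdc] at h
  exact h
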